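/- For n ≥ 4 and 2 ≤ m ≤ ⌊n/2⌋, every eigenvalue of an m×m doubly stochastic circulant matrix is an eigenvalue of some n×n permutative doubly stochastic matrix; consequently the convex hull Πₘ of the m-th roots of unity is contained in the eigenvalue region of n×n permutative doubly stochastic matrices. -/

import Mathlib

def IsDoublyStochastic {n : ℕ} (A : Matrix (Fin n) (Fin n) ℝ) : Prop :=
  (∀ i j, 0 ≤ A i j) ∧ (∀ i, ∑ j, A i j = 1) ∧ (∀ j, ∑ i, A i j = 1)

/-- Every row is a permutation of any other row. -/
def IsPermutative {n : ℕ} (A : Matrix (Fin n) (Fin n) ℝ) : Prop :=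
  ∀ i i' : Fin n, ∃ σ : Equiv.Perm (Fin n), ∀ j, A i j = A i' (σ j)

def HasEig {n : ℕ} (A : Matrix (Fin n) (Fin n) ℝ) (μ : ℂ) : Prop :=
  ∃ v : Fin n → ℂ, v ≠ 0 ∧ (A.map (fun r => (r : ℂ))).mulVec v = μ • v

/-! The eigenvalues of `circulant v` are the values `∑ k, v k * ζ ^ k` at the `m`-th roots of
unity `ζ`, so they fill out the convex hull of the roots of unity as `v` ranges over the standard
simplex. To realise one in size `n = m + (m + k)`, put `circulant v` next to the circulant of `v`
padded with `k` zeros: the block-diagonal matrix is doubly stochastic, keeps every eigenvalue of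
its first block, and each of its rows holds the entries of `v` together with `m + k` zeros, so any
two rows are rearrangements of each other. -/

open Finset Matrix

theorem exists_perm_apply_eq_of_map_univ_eq {ι α : Type*} [Fintype ι] {f g : ι → α}
    (h : univ.val.map f = univ.val.map g) : ∃ σ : Equiv.Perm ι, ∀ j, f j = g (σ j) := by
  classical
  have hcard (a : α) : Fintype.card {j // f j = a} = Fintype.card {j // g j = a} := by
    have := congrArg (Multiset.count a) h
    simp only [Multiset.count_map, @eq_comm _ a] at this
    rw [Fintype.card_subtype, Fintype.card_subtype]
    exact this
  exact ⟨Equiv.ofFiberEquiv fun a => Fintype.equivOfCardEq (hcard a),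
    fun j => (Equiv.ofFiberEquiv_map _ j).symm⟩

section RowMultisets

variable {ι κ α : Type*} [Fintype ι] [Fintype κ]

theorem map_univ_val_comp_equiv (f : ι → α) (e : κ ≃ ι) :
    univ.val.map (f ∘ e) = univ.val.map f := by
  rw [← Multiset.map_map, Multiset.map_univ_val_equiv]

theorem map_univ_val_sumElim (f : ι → α) (g : κ → α) :
    univ.val.map (Sum.elim f g) = univ.val.map f + univ.val.map g := by
  show Multiset.map _ (univ.disjSum univ).val = _
  simp [Finset.disjSum, Multiset.disjSum, Multiset.map_map]

theorem map_univ_val_zero [Zero α] : univ.val.map (0 : ι → α) = .replicate (Fintype.card ι) 0 :=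
  Multiset.map_const' _ _

theorem map_univ_val_finAppend {m k : ℕ} (u : Fin m → α) (w : Fin k → α) :
    univ.val.map (Fin.append u w) = univ.val.map u + univ.val.map w := by
  rw [← map_univ_val_sumElim, ← Fin.append_comp_sumElim]
  exact (map_univ_val_comp_equiv (Fin.append u w) finSumFinEquiv).symm

end RowMultisets

theorem isPermutative_of_map_univ_val_eq {n : ℕ} {A : Matrix (Fin n) (Fin n) ℝ} (s : Multiset ℝ)
    (h : ∀ i, univ.val.map (A i) = s) : IsPermutative A :=
  fun i i' => exists_perm_apply_eq_of_map_univ_eq ((h i).trans (h i').symm)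

theorem isDoublyStochastic_iff {n : ℕ} {A : Matrix (Fin n) (Fin n) ℝ} :
    IsDoublyStochastic A ↔ A ∈ doublyStochastic ℝ (Fin n) :=
  mem_doublyStochastic_iff_sum.symm

theorem fromBlocks_zero_mem_doublyStochastic {ι κ R : Type*} [Fintype ι] [DecidableEq ι]
    [Fintype κ] [DecidableEq κ] [Semiring R] [PartialOrder R] [IsOrderedRing R]
    {A : Matrix ι ι R} {B : Matrix κ κ R} (hA : A ∈ doublyStochastic R ι)
    (hB : B ∈ doublyStochastic R κ) : fromBlocks A 0 0 B ∈ doublyStochastic R (ι ⊕ κ) := by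
  rw [mem_doublyStochastic] at *
  refine ⟨?_, ?_, ?_⟩
  · rintro (i | i) (j | j) <;> simp [hA.1, hB.1]
  · simp [fromBlocks_mulVec, hA.2.1, hB.2.1]
  · simp [vecMul_fromBlocks, hA.2.2, hB.2.2]

section Circulant

variable {ι R : Type*} [Fintype ι]

theorem map_univ_val_circulant_row [AddGroup ι] (v : ι → R) (i : ι) :
    univ.val.map (circulant v i) = univ.val.map v :=
  map_univ_val_comp_equiv v (Equiv.subLeft i)

theorem circulant_mem_doublyStochastic [AddGroup ι] [DecidableEq ι] [Semiring R]
    [PartialOrder R] [IsOrderedRing R] {v : ι → R} (hv : ∀ i, 0 ≤ v i) (hs : ∑ i, v i = 1) :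
    circulant v ∈ doublyStochastic R ι := by
  refine mem_doublyStochastic_iff_sum.2 ⟨fun i j => hv _, fun i => ?_, fun j => ?_⟩
  · simpa [circulant_apply] using (Equiv.subLeft i).sum_comp v ▸ hs
  · simpa [circulant_apply] using (Equiv.subRight j).sum_comp v ▸ hs

theorem circulant_mulVec_addChar [AddCommGroup ι] [CommSemiring R] (v : ι → R) (ψ : AddChar ι R) :
    circulant v *ᵥ (fun j => ψ (-j)) = (∑ k, v k * ψ k) • fun j => ψ (-j) := by
  ext i
  simp only [mulVec, dotProduct, circulant_apply, Pi.smul_apply, smul_eq_mul, sum_mul]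
  refine Fintype.sum_equiv (Equiv.subLeft i) _ _ fun j => ?_
  rw [Equiv.subLeft_apply, mul_assoc, ← AddChar.map_add_eq_mul, ← sub_eq_add_neg,
    sub_sub_cancel_left]

end Circulant

def finAddChar {M : Type*} [Monoid M] {m : ℕ} [NeZero m] {ζ : M} (hζ : ζ ^ m = 1) :
    AddChar (Fin m) M where
  toFun k := ζ ^ (k : ℕ)
  map_zero_eq_one' := by simp
  map_add_eq_mul' a b := by rw [Fin.val_add, ← pow_eq_pow_mod _ hζ, pow_add]

theorem setOf_pow_eq_one_eq_range_finAddChar {R : Type*} [CommRing R] [IsDomain R] {m : ℕ}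
    [NeZero m] {ζ : R} (hζ : IsPrimitiveRoot ζ m) :
    {w : R | w ^ m = 1} = Set.range (finAddChar hζ.pow_eq_one) := by
  ext w
  constructor
  · intro hw
    obtain ⟨i, hi, rfl⟩ := hζ.eq_pow_of_pow_eq_one hw
    exact ⟨⟨i, hi⟩, rfl⟩
  · rintro ⟨k, rfl⟩
    show (ζ ^ (k : ℕ)) ^ m = 1
    rw [pow_right_comm, hζ.pow_eq_one, one_pow]

theorem hasEig_circulant {m : ℕ} [NeZero m] (v : Fin m → ℝ) (ψ : AddChar (Fin m) ℂ) :
    HasEig (circulant v) (∑ k, (v k : ℂ) * ψ k) :=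
  ⟨fun j => ψ (-j), fun h => by simpa using congrFun h 0,
    by rw [map_circulant]; exact circulant_mulVec_addChar _ ψ⟩

theorem convexHull_range_eq_image_stdSimplex {ι 𝕜 E : Type*} [Fintype ι] [Field 𝕜] [LinearOrder 𝕜]
    [IsStrictOrderedRing 𝕜] [AddCommGroup E] [Module 𝕜 E] (p : ι → E) :
    convexHull 𝕜 (Set.range p) = Fintype.linearCombination 𝕜 p '' stdSimplex 𝕜 ι := by
  classical
  have hp : p = Fintype.linearCombination 𝕜 p ∘ fun i => Pi.single i 1 := by
    ext i; simp
  conv_lhs => rw [hp, Set.range_comp, ← LinearMap.image_convexHull,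
    convexHull_rangle_single_eq_stdSimplex]

theorem exists_circulant_hasEig_of_mem_convexHull {m : ℕ} [NeZero m] {z : ℂ}
    (hz : z ∈ convexHull ℝ {w : ℂ | w ^ m = 1}) :
    ∃ c ∈ stdSimplex ℝ (Fin m), HasEig (circulant c) z := by
  have hζ := Complex.isPrimitiveRoot_exp m (NeZero.ne m)
  rw [setOf_pow_eq_one_eq_range_finAddChar hζ, convexHull_range_eq_image_stdSimplex] at hz
  obtain ⟨c, hc, rfl⟩ := hz
  refine ⟨c, hc, ?_⟩
  simpa [Fintype.linearCombination_apply, Complex.real_smul] using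
    hasEig_circulant c (finAddChar hζ.pow_eq_one)

theorem HasEig.reindex_fromBlocks_zero {m N : ℕ} {A : Matrix (Fin m) (Fin m) ℝ} {μ : ℂ}
    (h : HasEig A μ) (B : Matrix (Fin N) (Fin N) ℝ) :
    HasEig (reindex finSumFinEquiv finSumFinEquiv (fromBlocks A 0 0 B)) μ := by
  obtain ⟨u, hu0, hu⟩ := h
  refine ⟨Fin.append u 0, fun h => hu0 ?_, ?_⟩
  · ext j
    simpa using congrFun h (Fin.castAdd N j)
  · rw [reindex_apply, ← submatrix_map, submatrix_mulVec_equiv, fromBlocks_map]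
    ext i
    induction i using Fin.addCases <;>
      simp [fromBlocks_mulVec, Function.comp_def, hu, ← Pi.zero_def]

noncomputable def circulantBlockDiag {m : ℕ} (v : Fin m → ℝ) (k : ℕ) :
    Matrix (Fin (m + (m + k))) (Fin (m + (m + k))) ℝ :=
  reindex finSumFinEquiv finSumFinEquiv (fromBlocks (circulant v) 0 0 (circulant (Fin.append v 0)))

theorem isDoublyStochastic_circulantBlockDiag {m : ℕ} [NeZero m] {v : Fin m → ℝ}
    (hv : ∀ i, 0 ≤ v i) (hs : ∑ i, v i = 1) (k : ℕ) :
    IsDoublyStochastic (circulantBlockDiag v k) := by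
  have hpad : ∀ i, 0 ≤ Fin.append v (0 : Fin k → ℝ) i := Fin.addCases (by simpa using hv) (by simp)
  rw [isDoublyStochastic_iff]
  exact reindex_mem_doublyStochastic (fromBlocks_zero_mem_doublyStochastic
    (circulant_mem_doublyStochastic hv hs)
    (circulant_mem_doublyStochastic hpad (by simp [Fin.sum_univ_add, hs])))

theorem isPermutative_circulantBlockDiag {m : ℕ} [NeZero m] (v : Fin m → ℝ) (k : ℕ) :
    IsPermutative (circulantBlockDiag v k) := by
  refine isPermutative_of_map_univ_val_eq (univ.val.map v + .replicate (m + k) 0) fun i => ?_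
  change univ.val.map (fromBlocks _ _ _ _ (finSumFinEquiv.symm i) ∘ finSumFinEquiv.symm) = _
  rw [map_univ_val_comp_equiv]
  rcases finSumFinEquiv.symm i with a | b
  · change univ.val.map (Sum.elim (circulant v a) 0) = _
    rw [map_univ_val_sumElim, map_univ_val_circulant_row, map_univ_val_zero, Fintype.card_fin]
  · change univ.val.map (Sum.elim 0 (circulant (Fin.append v 0) b)) = _
    rw [map_univ_val_sumElim, map_univ_val_circulant_row, map_univ_val_zero, Fintype.card_fin,
      map_univ_val_finAppend, map_univ_val_zero, Fintype.card_fin, Multiset.replicate_add]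
    abel

theorem stmt18_general (n m : ℕ) (hmn : m ≤ n / 2)
    (v : Fin m → ℝ) (hv : ∀ i, 0 ≤ v i) (hs : ∑ i, v i = 1) :
    (∀ μ : ℂ, HasEig (Matrix.circulant v) μ →
      ∃ A : Matrix (Fin n) (Fin n) ℝ,
        IsDoublyStochastic A ∧ IsPermutative A ∧ HasEig A μ) ∧
    ∀ z ∈ convexHull ℝ {w : ℂ | w ^ m = 1},
      ∃ A : Matrix (Fin n) (Fin n) ℝ,
        IsDoublyStochastic A ∧ IsPermutative A ∧ HasEig A z := by
  have : NeZero m := ⟨by rintro rfl; simp at hs⟩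
  obtain ⟨k, rfl⟩ : ∃ k, n = m + (m + k) := ⟨n - 2 * m, by omega⟩
  have embed (c : Fin m → ℝ) (hc : c ∈ stdSimplex ℝ (Fin m)) (μ : ℂ)
      (hμ : HasEig (circulant c) μ) :
      ∃ A : Matrix (Fin (m + (m + k))) (Fin (m + (m + k))) ℝ,
        IsDoublyStochastic A ∧ IsPermutative A ∧ HasEig A μ :=
    ⟨circulantBlockDiag c k, isDoublyStochastic_circulantBlockDiag hc.1 hc.2 k,
      isPermutative_circulantBlockDiag c k, hμ.reindex_fromBlocks_zero _⟩
  refine ⟨embed v ⟨hv, hs⟩, fun z hz => ?_⟩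
  obtain ⟨c, hc, hcz⟩ := exists_circulant_hasEig_of_mem_convexHull hz
  exact embed c hc z hcz

theorem stmt18 (n m : ℕ) (hn : 4 ≤ n) (hm : 2 ≤ m) (hmn : m ≤ n / 2)
    (v : Fin m → ℝ) (hv : ∀ i, 0 ≤ v i) (hs : ∑ i, v i = 1) :
    (∀ μ : ℂ, HasEig (Matrix.circulant v) μ →
      ∃ A : Matrix (Fin n) (Fin n) ℝ,
        IsDoublyStochastic A ∧ IsPermutative A ∧ HasEig A μ) ∧
    ∀ z ∈ convexHull ℝ {w : ℂ | w ^ m = 1},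
      ∃ A : Matrix (Fin n) (Fin n) ℝ,
        IsDoublyStochastic A ∧ IsPermutative A ∧ HasEig A z :=
  stmt18_general n m hmn v hv hs
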